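/- Let q(x,ξ) = (1/2) c(x) ξ² + 2 ∫_{(0,∞)} (1 − cos(ξ y)) ν(x,dy) be a one-dimensional symmetric symbol (bounded c ≥ 0, Lévy kernel ν with sup_x ∫ min{1,y²} ν(x,dy) < ∞). For x ∈ ℝ and 0 ≤ y ≤ r define R(x,r,y) := ν(x, ⋃_{n=0}^∞ (2nr + y, 2(n+1)r − y]). Assume lim_{ξ→0} inf_{x∈ℝ} q(x,ξ)/ξ² = ∞. Then there exists r > 0 with ∫_{{|ξ|<r}} dξ / inf_{x∈ℝ} q(x,ξ) < ∞ if and only if ∫_ρ^∞ ( inf_{x∈ℝ} ∫_0^r y R(x,r,y) dy )^{-1} dr < ∞ for all sufficiently large ρ > 0. -/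

import Mathlib

/-!
Write `d(z)` for the distance from `z` to `2rℤ`. For `ξ = π / r`, `1 - cos (ξ z)` lies between
`(2/π²) ξ² d(z)²` and `ξ² d(z)² / 2`, and the layer-cake formula gives
`∫₀^r y R(x,r,y) dy = ∫ d(z)²/2 ν(x,dz)`, since `⋃ₙ (2nr + y, 2(n+1)r − y]` lies between
`{d > y}` and `{d ≥ y}`. So `q(x, π/r)` is comparable to `r⁻² ∫₀^r y R(x,r,y) dy`, up to the
diffusion term `c(x) π²/(2r²)`, which condition (3.2) absorbs once `r` is large. The
substitution `ξ = π/r` then compares the two integrals, and the evenness of `q(x, ·)` reduces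
the ball `|ξ| < π/ρ` to the interval `(0, π/ρ)`.
-/

open MeasureTheory Filter Topology
open scoped ENNReal

/-- A one-dimensional symmetric symbol:
`q(x,ξ) = (1/2)c(x)ξ² + 2∫_{(0,∞)} (1 − cos(ξy)) ν(x,dy)`, valued in `[0,∞]`. -/
noncomputable def oneDimSymbol (c : ℝ → ℝ) (ν : ℝ → MeasureTheory.Measure ℝ)
    (x ξ : ℝ) : ℝ≥0∞ :=
  ENNReal.ofReal ((1 / 2) * c x * ξ ^ 2) +
    2 * ∫⁻ y in Set.Ioi (0 : ℝ), ENNReal.ofReal (1 - Real.cos (ξ * y)) ∂(ν x)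

/-- `R(x,r,y) = ν(x, ⋃ₙ (2nr + y, 2(n+1)r − y])`. -/
noncomputable def Rcyl (ν : ℝ → MeasureTheory.Measure ℝ) (x r y : ℝ) : ℝ≥0∞ :=
  ν x (⋃ n : ℕ, Set.Ioc (2 * (n : ℝ) * r + y) (2 * ((n : ℝ) + 1) * r - y))

open Set Real

/-- The distance from `z` to `2rℤ`, for `r > 0`. -/
noncomputable def foldDist (r z : ℝ) : ℝ :=
  min (z - 2 * r * ⌊z / (2 * r)⌋) (2 * r - (z - 2 * r * ⌊z / (2 * r)⌋))

def cylSet (r y : ℝ) : Set ℝ :=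
  ⋃ n : ℕ, Ioc (2 * (n : ℝ) * r + y) (2 * ((n : ℝ) + 1) * r - y)

section foldDist

variable {r : ℝ}

lemma foldDist_nonneg (hr : 0 < r) (z : ℝ) : 0 ≤ foldDist r z := by
  have h2r : 0 < 2 * r := by positivity
  have h1 := (le_div_iff₀ h2r).mp (Int.floor_le (z / (2 * r)))
  have h2 := (div_lt_iff₀ h2r).mp (Int.lt_floor_add_one (z / (2 * r)))
  exact le_min (by linarith) (by linarith)

lemma foldDist_le (z : ℝ) : foldDist r z ≤ r := by
  unfold foldDist
  rcases le_total (z - 2 * r * ⌊z / (2 * r)⌋) r with h | h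
  · exact (min_le_left _ _).trans h
  · exact (min_le_right _ _).trans (by linarith)

lemma measurable_foldDist (r : ℝ) : Measurable (foldDist r) := by
  unfold foldDist
  fun_prop

lemma cos_pi_div_mul_foldDist (hr : 0 < r) (z : ℝ) :
    cos (π / r * foldDist r z) = cos (π / r * z) := by
  set w := z - 2 * r * ⌊z / (2 * r)⌋
  have hw : cos (π / r * w) = cos (π / r * z) := by
    have : π / r * z = π / r * w + (⌊z / (2 * r)⌋ : ℤ) * (2 * π) := by
      simp only [w]; field_simp; ring
    rw [this, cos_add_int_mul_two_pi]
  rcases le_total w r with h | h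
  · rw [foldDist, min_eq_left (by linarith), hw]
  · have : π / r * (2 * r - w) = 2 * π - π / r * w := by field_simp
    rw [foldDist, min_eq_right (by linarith), this, cos_two_pi_sub, hw]

lemma four_div_sq_mul_foldDist_le_one_sub_cos (hr : 0 < r) (z : ℝ) :
    4 / r ^ 2 * (foldDist r z ^ 2 / 2) ≤ 1 - cos (π / r * z) := by
  have h0 : 0 ≤ π / r * foldDist r z := by have := foldDist_nonneg hr z; positivity
  have hπ : π / r * foldDist r z ≤ π := by
    calc π / r * foldDist r z ≤ π / r * r := by gcongr; exact foldDist_le z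
      _ = π := by field_simp
  have := cos_le_one_sub_mul_cos_sq (abs_le.mpr ⟨by linarith [pi_pos], hπ⟩)
  rw [cos_pi_div_mul_foldDist hr] at this
  have e : 2 / π ^ 2 * (π / r * foldDist r z) ^ 2 = 4 / r ^ 2 * (foldDist r z ^ 2 / 2) := by
    field_simp; ring
  linarith

lemma one_sub_cos_le_pi_sq_div_sq_mul_foldDist (hr : 0 < r) (z : ℝ) :
    1 - cos (π / r * z) ≤ π ^ 2 / r ^ 2 * (foldDist r z ^ 2 / 2) := by
  have := one_sub_sq_div_two_le_cos (x := π / r * foldDist r z)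
  rw [cos_pi_div_mul_foldDist hr] at this
  have e : (π / r * foldDist r z) ^ 2 / 2 = π ^ 2 / r ^ 2 * (foldDist r z ^ 2 / 2) := by
    field_simp
  linarith

lemma mem_cylSet_iff (hr : 0 < r) {t z : ℝ} (ht : 0 < t) :
    z ∈ cylSet r t ↔
      0 < z ∧ t < z - 2 * r * ⌊z / (2 * r)⌋ ∧ t ≤ 2 * r - (z - 2 * r * ⌊z / (2 * r)⌋) := by
  have h2r : (0:ℝ) < 2 * r := by positivity
  simp only [cylSet, mem_iUnion, mem_Ioc]
  constructor
  · rintro ⟨n, h1, h2⟩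
    have hn0 : (0:ℝ) ≤ 2 * n * r := by positivity
    have hfl : ⌊z / (2 * r)⌋ = (n : ℤ) := by
      rw [Int.floor_eq_iff, le_div_iff₀ h2r, div_lt_iff₀ h2r]
      push_cast
      constructor <;> nlinarith
    refine ⟨by linarith, ?_, ?_⟩ <;> rw [hfl] <;> push_cast <;> nlinarith
  · rintro ⟨hz, h1, h2⟩
    have hfl0 : (0:ℤ) ≤ ⌊z / (2 * r)⌋ := Int.floor_nonneg.mpr (by positivity)
    refine ⟨⌊z / (2 * r)⌋.toNat, ?_, ?_⟩ <;>
      rw [show ((⌊z / (2 * r)⌋.toNat : ℕ) : ℝ) = (⌊z / (2 * r)⌋ : ℝ) by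
        rw [← Int.cast_natCast, Int.toNat_of_nonneg hfl0]] <;> nlinarith

lemma cylSet_subset_le_foldDist (hr : 0 < r) {t : ℝ} (ht : 0 < t) :
    cylSet r t ⊆ {z | t ≤ foldDist r z} ∩ Ioi 0 := fun _ hz => by
  obtain ⟨hz, h1, h2⟩ := (mem_cylSet_iff hr ht).mp hz
  exact ⟨le_min h1.le h2, hz⟩

lemma lt_foldDist_subset_cylSet (hr : 0 < r) {t : ℝ} (ht : 0 < t) :
    {z | t < foldDist r z} ∩ Ioi 0 ⊆ cylSet r t := fun _ ⟨h, hz⟩ =>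
  (mem_cylSet_iff hr ht).mpr ⟨hz, h.trans_le (min_le_left _ _), h.le.trans (min_le_right _ _)⟩

end foldDist

lemma setLIntegral_mul_measure_cylSet (μ : Measure ℝ) {r : ℝ} (hr : 0 < r) :
    ∫⁻ t in Ioc 0 r, ENNReal.ofReal t * μ (cylSet r t) =
      ∫⁻ z in Ioi 0, ENNReal.ofReal (foldDist r z ^ 2 / 2) ∂μ := by
  set μ' := μ.restrict (Ioi 0)
  have hcake : ∀ z, foldDist r z ^ 2 / 2 = ∫ t in (0)..(foldDist r z), t := fun z => by
    rw [integral_id]; ring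
  have h_nn : 0 ≤ᵐ[μ'] foldDist r := Eventually.of_forall (foldDist_nonneg hr)
  have h_meas : AEMeasurable (foldDist r) μ' := (measurable_foldDist r).aemeasurable
  have h_int : ∀ t > 0, IntervalIntegrable (fun t : ℝ => t) volume 0 t :=
    fun _ _ => intervalIntegral.intervalIntegrable_id
  have h_pos : ∀ᵐ t : ℝ ∂volume.restrict (Ioi 0), 0 ≤ t :=
    (ae_restrict_mem measurableSet_Ioi).mono fun _ ht => le_of_lt ht
  have hle := lintegral_comp_eq_lintegral_meas_le_mul μ' h_nn h_meas h_int h_pos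
  have hlt := lintegral_comp_eq_lintegral_meas_lt_mul μ' h_nn h_meas h_int h_pos
  simp only [← hcake] at hle hlt
  have h_supp : (Function.support fun t => μ' {z | t < foldDist r z} * ENNReal.ofReal t) ⊆
      Ioc 0 r := by
    intro t ht
    by_contra hnot
    rcases not_and_or.mp hnot with h | h
    · simp [ENNReal.ofReal_eq_zero.mpr (not_lt.mp h)] at ht
    · have : {z | t < foldDist r z} = ∅ :=
        eq_empty_of_forall_notMem fun z (hz : t < foldDist r z) => h (hz.le.trans (foldDist_le z))
      simp [this] at ht
  refine le_antisymm ?_ ?_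
  · rw [hle]
    refine le_trans ?_ (lintegral_mono_set (Ioc_subset_Ioi_self : Ioc 0 r ⊆ Ioi 0))
    refine setLIntegral_mono' measurableSet_Ioc fun t ht => ?_
    rw [mul_comm, Measure.restrict_apply' measurableSet_Ioi]
    gcongr
    exact cylSet_subset_le_foldDist hr ht.1
  · rw [hlt]
    refine (setLIntegral_le_lintegral _ _).trans ?_
    rw [← setLIntegral_eq_of_support_subset h_supp]
    refine setLIntegral_mono' measurableSet_Ioc fun t ht => ?_
    rw [mul_comm, Measure.restrict_apply' measurableSet_Ioi]
    gcongr
    exact lt_foldDist_subset_cylSet hr ht.1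

section symbol

variable (c : ℝ → ℝ) (ν : ℝ → Measure ℝ)

lemma oneDimSymbol_neg (x ξ : ℝ) : oneDimSymbol c ν x (-ξ) = oneDimSymbol c ν x ξ := by
  simp [oneDimSymbol, neg_mul, cos_neg]

lemma setLIntegral_mul_Rcyl (x : ℝ) {r : ℝ} (hr : 0 < r) :
    ∫⁻ y in Ioc 0 r, ENNReal.ofReal y * Rcyl ν x r y =
      ∫⁻ z in Ioi 0, ENNReal.ofReal (foldDist r z ^ 2 / 2) ∂ν x :=
  setLIntegral_mul_measure_cylSet (ν x) hr

lemma ofReal_mul_setLIntegral_Rcyl_le_oneDimSymbol (x : ℝ) {r : ℝ} (hr : 0 < r) :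
    ENNReal.ofReal (8 / r ^ 2) * ∫⁻ y in Ioc 0 r, ENNReal.ofReal y * Rcyl ν x r y ≤
      oneDimSymbol c ν x (π / r) := by
  rw [setLIntegral_mul_Rcyl ν x hr, ← lintegral_const_mul' _ _ ENNReal.ofReal_ne_top]
  calc ∫⁻ z in Ioi 0, ENNReal.ofReal (8 / r ^ 2) * ENNReal.ofReal (foldDist r z ^ 2 / 2) ∂ν x
      = 2 * ∫⁻ z in Ioi 0, ENNReal.ofReal (4 / r ^ 2 * (foldDist r z ^ 2 / 2)) ∂ν x := by
        rw [← lintegral_const_mul' _ _ ENNReal.ofNat_ne_top]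
        congr 1 with z
        rw [← ENNReal.ofReal_ofNat 2, ← ENNReal.ofReal_mul (by positivity),
          ← ENNReal.ofReal_mul (by positivity)]
        ring_nf
    _ ≤ 2 * ∫⁻ z in Ioi 0, ENNReal.ofReal (1 - cos (π / r * z)) ∂ν x := by
        gcongr with z
        exact four_div_sq_mul_foldDist_le_one_sub_cos hr z
    _ ≤ oneDimSymbol c ν x (π / r) := le_add_self

lemma oneDimSymbol_le_add_ofReal_mul_setLIntegral_Rcyl (x : ℝ) {r : ℝ} (hr : 0 < r) :
    oneDimSymbol c ν x (π / r) ≤ ENNReal.ofReal (1 / 2 * c x * (π / r) ^ 2) +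
      ENNReal.ofReal (2 * π ^ 2 / r ^ 2) * ∫⁻ y in Ioc 0 r, ENNReal.ofReal y * Rcyl ν x r y := by
  rw [setLIntegral_mul_Rcyl ν x hr, ← lintegral_const_mul' _ _ ENNReal.ofReal_ne_top]
  refine add_le_add_right ?_ _
  calc 2 * ∫⁻ z in Ioi 0, ENNReal.ofReal (1 - cos (π / r * z)) ∂ν x
      ≤ 2 * ∫⁻ z in Ioi 0, ENNReal.ofReal (π ^ 2 / r ^ 2 * (foldDist r z ^ 2 / 2)) ∂ν x := by
        gcongr with z
        exact one_sub_cos_le_pi_sq_div_sq_mul_foldDist hr z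
    _ = ∫⁻ z in Ioi 0,
          ENNReal.ofReal (2 * π ^ 2 / r ^ 2) * ENNReal.ofReal (foldDist r z ^ 2 / 2) ∂ν x := by
        rw [← lintegral_const_mul' _ _ ENNReal.ofNat_ne_top]
        congr 1 with z
        rw [← ENNReal.ofReal_ofNat 2, ← ENNReal.ofReal_mul (by positivity),
          ← ENNReal.ofReal_mul (by positivity)]
        ring_nf

end symbol

lemma setLIntegral_ball_zero_eq_two_mul {h : ℝ → ℝ≥0∞} (h_even : ∀ ξ, h (-ξ) = h ξ) (a : ℝ) :
    ∫⁻ ξ in Metric.ball 0 a, h ξ = 2 * ∫⁻ ξ in Ioo 0 a, h ξ := by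
  have hsplit : Metric.ball (0 : ℝ) a = Ioo (-a) 0 ∪ Ico 0 a := by
    ext ξ
    simp only [Real.ball_eq_Ioo, zero_sub, zero_add, mem_Ioo, mem_union, mem_Ico]
    constructor
    · rintro ⟨h1, h2⟩
      rcases lt_or_ge ξ 0 with h | h
      exacts [Or.inl ⟨h1, h⟩, Or.inr ⟨h, h2⟩]
    · rintro (⟨h1, h2⟩ | ⟨h1, h2⟩) <;> constructor <;> linarith
  have hneg : ∫⁻ ξ in Ioo (-a) 0, h ξ = ∫⁻ ξ in Ioo 0 a, h ξ := by
    have := lintegral_image_eq_lintegral_abs_deriv_mul measurableSet_Ioo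
      (fun ξ _ => (hasDerivAt_neg ξ).hasDerivWithinAt) neg_injective.injOn h (s := Ioo 0 a)
    simpa [image_neg_eq_neg, neg_Ioo, h_even] using this
  rw [hsplit, lintegral_union measurableSet_Ico (disjoint_left.mpr fun _ h1 h2 => lt_irrefl _ (h1.2.trans_le h2.1)), hneg,
    setLIntegral_congr Ioo_ae_eq_Ico.symm, two_mul]

lemma setLIntegral_Ioo_zero_const_div {a ρ : ℝ} (ha : 0 < a) (hρ : 0 < ρ) (g : ℝ → ℝ≥0∞) :
    ∫⁻ ξ in Ioo 0 (a / ρ), g ξ = ∫⁻ r in Ioi ρ, ENNReal.ofReal (a / r ^ 2) * g (a / r) := by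
  have himage : (fun r => a / r) '' Ioi ρ = Ioo 0 (a / ρ) := by
    ext ξ
    simp only [mem_image, mem_Ioi, mem_Ioo]
    constructor
    · rintro ⟨r, hr, rfl⟩
      exact ⟨div_pos ha (hρ.trans hr), div_lt_div_of_pos_left ha hρ hr⟩
    · rintro ⟨hξ, hξρ⟩
      refine ⟨a / ξ, ?_, by field_simp⟩
      rwa [lt_div_iff₀ hξ, mul_comm, ← lt_div_iff₀ hρ]
  have hderiv : ∀ r ∈ Ioi ρ, HasDerivWithinAt (fun r => a / r) (-(a / r ^ 2)) (Ioi ρ) r := by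
    intro r hr
    have hr0 : r ≠ 0 := (hρ.trans hr).ne'
    have : HasDerivAt (fun r => a / r) (-(a / r ^ 2)) r := by
      simpa [div_eq_mul_inv] using (hasDerivAt_inv hr0).const_mul a
    exact this.hasDerivWithinAt
  have hinj : InjOn (fun r => a / r) (Ioi ρ) := fun p hp q hq hpq => by
    have := (div_eq_div_iff (hρ.trans hp).ne' (hρ.trans hq).ne').mp hpq
    exact (mul_left_cancel₀ ha.ne' this).symm
  rw [← himage, lintegral_image_eq_lintegral_abs_deriv_mul measurableSet_Ioi hderiv hinj]
  refine setLIntegral_congr_fun measurableSet_Ioi fun r _ => ?_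
  rw [abs_neg, abs_of_nonneg (by positivity)]

lemma ofReal_div_sq_mul_inv_ofReal_div_sq_mul {a b r : ℝ} (ha : 0 < a) (hb : 0 < b) (hr : r ≠ 0)
    (J : ℝ≥0∞) :
    ENNReal.ofReal (a / r ^ 2) * (ENNReal.ofReal (b / r ^ 2) * J)⁻¹ =
      ENNReal.ofReal (a / b) * J⁻¹ := by
  rw [ENNReal.mul_inv (Or.inl (ENNReal.ofReal_pos.mpr (by positivity)).ne')
      (Or.inl ENNReal.ofReal_ne_top), ← mul_assoc, ← ENNReal.ofReal_inv_of_pos (by positivity),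
    ← ENNReal.ofReal_mul (by positivity)]
  congr 2
  field_simp

lemma setLIntegral_inv_lt_top_iff_of_comparable {Q J : ℝ → ℝ≥0∞} {ρ a b : ℝ} (hρ : 0 < ρ)
    (ha : 0 < a) (hb : 0 < b)
    (hlower : ∀ r > ρ, ENNReal.ofReal (a / r ^ 2) * J r ≤ Q (π / r))
    (hupper : ∀ r > ρ, Q (π / r) ≤ ENNReal.ofReal (b / r ^ 2) * J r) :
    ∫⁻ ξ in Ioo 0 (π / ρ), (Q ξ)⁻¹ < ∞ ↔ ∫⁻ r in Ioi ρ, (J r)⁻¹ < ∞ := by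
  rw [setLIntegral_Ioo_zero_const_div pi_pos hρ]
  constructor
  · intro hfin
    have hle : ∫⁻ r in Ioi ρ, ENNReal.ofReal (π / b) * (J r)⁻¹ ≤
        ∫⁻ r in Ioi ρ, ENNReal.ofReal (π / r ^ 2) * (Q (π / r))⁻¹ := by
      refine setLIntegral_mono' measurableSet_Ioi fun r hr => ?_
      rw [← ofReal_div_sq_mul_inv_ofReal_div_sq_mul pi_pos hb (hρ.trans hr).ne']
      gcongr
      exact hupper r hr
    rw [lintegral_const_mul' _ _ ENNReal.ofReal_ne_top] at hle
    exact ENNReal.lt_top_of_mul_ne_top_right (hle.trans_lt hfin).ne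
      (ENNReal.ofReal_pos.mpr (by positivity)).ne'
  · intro hfin
    calc ∫⁻ r in Ioi ρ, ENNReal.ofReal (π / r ^ 2) * (Q (π / r))⁻¹
        ≤ ∫⁻ r in Ioi ρ, ENNReal.ofReal (π / a) * (J r)⁻¹ := by
          refine setLIntegral_mono' measurableSet_Ioi fun r hr => ?_
          rw [← ofReal_div_sq_mul_inv_ofReal_div_sq_mul pi_pos ha (hρ.trans hr).ne']
          gcongr
          exact hlower r hr
      _ < ∞ := by
          rw [lintegral_const_mul' _ _ ENNReal.ofReal_ne_top]
          exact ENNReal.mul_lt_top ENNReal.ofReal_lt_top hfin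

lemma ENNReal.le_two_mul_of_two_mul_le_of_le_add {a b d : ℝ≥0∞} (hb : b ≠ ∞) (h2b : 2 * b ≤ a)
    (hab : a ≤ b + d) : a ≤ 2 * d := by
  have hbd : b ≤ d := (ENNReal.add_le_add_iff_left hb).mp (two_mul b ▸ h2b.trans hab)
  calc a ≤ b + d := hab
    _ ≤ d + d := by gcongr
    _ = 2 * d := (two_mul d).symm

section symbolInf

variable (c : ℝ → ℝ) (ν : ℝ → Measure ℝ)

lemma ofReal_mul_iInf_setLIntegral_Rcyl_le_iInf_oneDimSymbol {r : ℝ} (hr : 0 < r) :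
    ENNReal.ofReal (8 / r ^ 2) * ⨅ x, ∫⁻ y in Ioc 0 r, ENNReal.ofReal y * Rcyl ν x r y ≤
      ⨅ x, oneDimSymbol c ν x (π / r) :=
  le_iInf fun x => (mul_le_mul_right (iInf_le _ x) _).trans
    (ofReal_mul_setLIntegral_Rcyl_le_oneDimSymbol c ν x hr)

lemma iInf_oneDimSymbol_le_ofReal_mul_iInf_setLIntegral_Rcyl {K r : ℝ} (hK : ∀ x, c x ≤ K)
    (hr : 0 < r) (hq : ENNReal.ofReal (K * (π / r) ^ 2) ≤ ⨅ x, oneDimSymbol c ν x (π / r)) :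
    ⨅ x, oneDimSymbol c ν x (π / r) ≤
      ENNReal.ofReal (4 * π ^ 2 / r ^ 2) *
        ⨅ x, ∫⁻ y in Ioc 0 r, ENNReal.ofReal y * Rcyl ν x r y := by
  set C := ENNReal.ofReal (1 / 2 * K * (π / r) ^ 2)
  set D := ENNReal.ofReal (2 * π ^ 2 / r ^ 2)
  have hD : D ≠ 0 := (ENNReal.ofReal_pos.mpr (by positivity)).ne'
  have hsplit : ⨅ x, oneDimSymbol c ν x (π / r) ≤
      C + D * ⨅ x, ∫⁻ y in Ioc 0 r, ENNReal.ofReal y * Rcyl ν x r y := by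
    rw [ENNReal.mul_iInf_of_ne hD ENNReal.ofReal_ne_top, ENNReal.add_iInf]
    refine iInf_mono fun x => (oneDimSymbol_le_add_ofReal_mul_setLIntegral_Rcyl c ν x hr).trans ?_
    gcongr ?_ + _
    exact ENNReal.ofReal_le_ofReal (by gcongr; exact hK x)
  have hC : 2 * C = ENNReal.ofReal (K * (π / r) ^ 2) := by
    rw [← ENNReal.ofReal_ofNat 2, ← ENNReal.ofReal_mul zero_le_two]
    ring_nf
  calc ⨅ x, oneDimSymbol c ν x (π / r)
      ≤ 2 * (D * ⨅ x, ∫⁻ y in Ioc 0 r, ENNReal.ofReal y * Rcyl ν x r y) :=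
        ENNReal.le_two_mul_of_two_mul_le_of_le_add ENNReal.ofReal_ne_top (hC ▸ hq) hsplit
    _ = _ := by
        rw [← mul_assoc, ← ENNReal.ofReal_ofNat 2, ← ENNReal.ofReal_mul zero_le_two]
        ring_nf

end symbolInf

lemma eventually_ofReal_mul_sq_le {Q : ℝ → ℝ≥0∞}
    (hQ : Tendsto (fun ξ => Q ξ / ENNReal.ofReal (ξ ^ 2)) (𝓝[≠] 0) (𝓝 ∞)) (K : ℝ) :
    ∀ᶠ r in atTop, ENNReal.ofReal (K * (π / r) ^ 2) ≤ Q (π / r) := by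
  have hπr : Tendsto (fun r : ℝ => π / r) atTop (𝓝[≠] 0) :=
    tendsto_nhdsWithin_iff.mpr ⟨tendsto_id.const_div_atTop π,
      (eventually_gt_atTop 0).mono fun r hr => div_ne_zero pi_ne_zero hr.ne'⟩
  filter_upwards [(hQ.comp hπr).eventually_const_le ENNReal.ofReal_lt_top,
    eventually_gt_atTop 0] with r hK hr
  rw [ENNReal.ofReal_mul' (sq_nonneg _)]
  exact (ENNReal.le_div_iff_mul_le (Or.inl (ENNReal.ofReal_pos.mpr (by positivity)).ne')
    (Or.inl ENNReal.ofReal_ne_top)).mp hK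

theorem stmt14_general (c : ℝ → ℝ) (ν : ℝ → MeasureTheory.Measure ℝ)
    (hcb : ∃ K : ℝ, ∀ x, c x ≤ K)
    (hlim : Tendsto (fun ξ : ℝ => (⨅ x, oneDimSymbol c ν x ξ) / ENNReal.ofReal (ξ ^ 2))
      (𝓝[≠] (0 : ℝ)) (𝓝 ∞)) :
    (∃ r > (0 : ℝ), ∫⁻ ξ in Metric.ball (0 : ℝ) r,
        (⨅ x, oneDimSymbol c ν x ξ)⁻¹ < ∞) ↔
      (∃ ρ₀ > (0 : ℝ), ∀ ρ : ℝ, ρ₀ ≤ ρ →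
        ∫⁻ r in Set.Ioi ρ,
          (⨅ x, ∫⁻ y in Set.Ioc (0 : ℝ) r, ENNReal.ofReal y * Rcyl ν x r y)⁻¹ < ∞) := by
  obtain ⟨K, hK⟩ := hcb
  obtain ⟨ρ₀, hρ₀⟩ := eventually_atTop.mp (eventually_ofReal_mul_sq_le hlim K)
  set ρ₁ := max ρ₀ 1
  have hρ₁ : 0 < ρ₁ := zero_lt_one.trans_le (le_max_right _ _)
  have hcomp : ∀ ρ ≥ ρ₁, (∫⁻ ξ in Ioo 0 (π / ρ), (⨅ x, oneDimSymbol c ν x ξ)⁻¹ < ∞ ↔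
      ∫⁻ r in Ioi ρ, (⨅ x, ∫⁻ y in Ioc 0 r, ENNReal.ofReal y * Rcyl ν x r y)⁻¹ < ∞) :=
    fun ρ hρ => setLIntegral_inv_lt_top_iff_of_comparable (hρ₁.trans_le hρ) (by norm_num)
      (by positivity)
      (fun r hr => ofReal_mul_iInf_setLIntegral_Rcyl_le_iInf_oneDimSymbol c ν (by linarith))
      (fun r hr => iInf_oneDimSymbol_le_ofReal_mul_iInf_setLIntegral_Rcyl c ν hK (by linarith)
        (hρ₀ r (by linarith [le_max_left ρ₀ 1])))
  constructor
  · rintro ⟨r₀, hr₀, hfin⟩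
    refine ⟨max ρ₁ (π / r₀), hρ₁.trans_le (le_max_left _ _), fun ρ hρ =>
      (hcomp ρ (le_of_max_le_left hρ)).mp (lt_of_le_of_lt (lintegral_mono_set ?_) hfin)⟩
    have hπρ : π / ρ ≤ r₀ := (div_le_comm₀ (hρ₁.trans_le (le_of_max_le_left hρ)) hr₀).mpr
      (le_of_max_le_right hρ)
    rw [Real.ball_eq_Ioo, zero_sub, zero_add]
    exact Ioo_subset_Ioo (by linarith) hπρ
  · rintro ⟨ρ₂, -, hρ₂⟩
    have hρ : 0 < max ρ₁ ρ₂ := hρ₁.trans_le (le_max_left _ _)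
    refine ⟨π / max ρ₁ ρ₂, by positivity, ?_⟩
    rw [setLIntegral_ball_zero_eq_two_mul fun ξ => by simp only [oneDimSymbol_neg]]
    exact ENNReal.mul_lt_top ENNReal.ofNat_lt_top
      ((hcomp _ (le_max_left _ _)).mpr (hρ₂ _ (le_max_right _ _)))

/-- characterization of the Chung–Fuchs transience condition in terms of
the Lévy measure via the quantity `R(x,r,y)`, under condition (3.2). -/
theorem stmt14 (c : ℝ → ℝ) (ν : ℝ → MeasureTheory.Measure ℝ)
    (hc : ∀ x, 0 ≤ c x) (hcb : ∃ K : ℝ, ∀ x, c x ≤ K)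
    (hν : (⨆ x, ∫⁻ y in Set.Ioi (0 : ℝ), ENNReal.ofReal (min 1 (y ^ 2)) ∂(ν x)) < ∞)
    (hmq : Measurable fun ξ : ℝ => ⨅ x, oneDimSymbol c ν x ξ)
    (hmR : Measurable fun r : ℝ =>
      ⨅ x, ∫⁻ y in Set.Ioc (0 : ℝ) r, ENNReal.ofReal y * Rcyl ν x r y)
    (hlim : Tendsto (fun ξ : ℝ => (⨅ x, oneDimSymbol c ν x ξ) / ENNReal.ofReal (ξ ^ 2))
      (𝓝[≠] (0 : ℝ)) (𝓝 ∞)) :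
    (∃ r > (0 : ℝ), ∫⁻ ξ in Metric.ball (0 : ℝ) r,
        (⨅ x, oneDimSymbol c ν x ξ)⁻¹ < ∞) ↔
      (∃ ρ₀ > (0 : ℝ), ∀ ρ : ℝ, ρ₀ ≤ ρ →
        ∫⁻ r in Set.Ioi ρ,
          (⨅ x, ∫⁻ y in Set.Ioc (0 : ℝ) r, ENNReal.ofReal y * Rcyl ν x r y)⁻¹ < ∞) :=
  stmt14_general c ν hcb hlim
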